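/- arXiv:1406.6331 — 3 statements merged into one kernel-verified Lean document; each statement's English description precedes it below -/
import Mathlib

section
/- If X is connected and f is a subharmonic function on X attaining its supremum at an interior point x₀ ∈ X \ ∂X, then f is constant on X. -/
def Nset {X : Type*} (w : X → X → ℝ) (a : X) : ℕ → Set X
  | 0 => {a}
  | k + 1 => {y | ∃ x ∈ Nset w a k, 0 < w x y}

section Subharmonic

variable {X : Type*} {w : X → X → ℝ} {f : X → ℝ}

/-- The weighted mean of `f x - f ζ` is `≤ 0` at a maximum point `x`, while every term is
`≥ 0`; hence every term vanishes. -/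
theorem eq_of_isMax_of_pos_weight (hnn : ∀ x y, 0 ≤ w x y)
    (hfin : ∀ x, (Function.support (w x)).Finite) (hrow : ∀ x, ∑ᶠ y, w x y = 1)
    (hsub : ∀ x, f x ≤ ∑ᶠ ζ, w x ζ * f ζ) {x y : X} (hmax : ∀ ζ, f ζ ≤ f x)
    (hxy : 0 < w x y) : f y = f x := by
  set g : X → ℝ := fun ζ => w x ζ * (f x - f ζ)
  have hg_nonneg : ∀ ζ, 0 ≤ g ζ := fun ζ => mul_nonneg (hnn x ζ) (sub_nonneg.2 (hmax ζ))
  have hfin_mul : ∀ h : X → ℝ, (Function.support fun ζ => w x ζ * h ζ).Finite :=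
    fun h => (hfin x).subset (Function.support_mul_subset_left _ _)
  have hg_sum : ∑ᶠ ζ, g ζ ≤ 0 :=
    calc ∑ᶠ ζ, g ζ = ∑ᶠ ζ, w x ζ * f x - ∑ᶠ ζ, w x ζ * f ζ := by
          rw [← finsum_sub_distrib (hfin_mul _) (hfin_mul _)]
          exact finsum_congr fun ζ => mul_sub _ _ _
      _ = f x - ∑ᶠ ζ, w x ζ * f ζ := by rw [← finsum_mul, hrow, one_mul]
      _ ≤ 0 := sub_nonpos.2 (hsub x)
  have hgy : g y = 0 :=
    le_antisymm ((single_le_finsum y (hfin_mul _) hg_nonneg).trans hg_sum) (hg_nonneg y)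
  have := (mul_eq_zero.1 hgy).resolve_left hxy.ne'
  linarith

theorem Nset_subset {S : Set X} (hS : ∀ x ∈ S, ∀ y, 0 < w x y → y ∈ S) {a : X} (ha : a ∈ S) :
    ∀ k, Nset w a k ⊆ S
  | 0 => Set.singleton_subset_iff.2 ha
  | k + 1 => fun _ ⟨x, hx, hxy⟩ => hS x (Nset_subset hS ha k hx) _ hxy

end Subharmonic

theorem stmt_5_general {X : Type*} (w : X → X → ℝ)
    (hnn : ∀ x y, 0 ≤ w x y) (hfin : ∀ x, (Function.support (w x)).Finite)
    (hrow : ∀ x, ∑ᶠ y, w x y = 1)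
    (hconn : ∀ a : X, w a a ≠ 1 → (⋃ k, Nset w a k) = Set.univ)
    (f : X → ℝ) (hsub : ∀ x, f x ≤ ∑ᶠ ζ, w x ζ * f ζ)
    (x₀ : X) (hx₀ : w x₀ x₀ ≠ 1) (hmax : ∀ x, f x ≤ f x₀) :
    ∀ x y : X, f x = f y := by
  set maxPoints : Set X := {z | ∀ ζ, f ζ ≤ f z}
  have hclosed : ∀ x ∈ maxPoints, ∀ y, 0 < w x y → y ∈ maxPoints := fun x hx y hxy ζ =>
    (hx ζ).trans (eq_of_isMax_of_pos_weight hnn hfin hrow hsub hx hxy).ge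
  have hall : ∀ z, z ∈ maxPoints := by
    intro z
    obtain ⟨k, hk⟩ := Set.mem_iUnion.1 ((hconn x₀ hx₀).symm ▸ Set.mem_univ z)
    exact Nset_subset hclosed hmax k hk
  exact fun x y => le_antisymm (hall y x) (hall x y)

/-- on a connected graph, a subharmonic function attaining its
supremum at an interior point is constant. -/
theorem stmt_5 {X : Type*} [Countable X] (w : X → X → ℝ)
    (hnn : ∀ x y, 0 ≤ w x y) (hfin : ∀ x, (Function.support (w x)).Finite)
    (hrow : ∀ x, ∑ᶠ y, w x y = 1)
    (hconn : ∀ a : X, w a a ≠ 1 → (⋃ k, Nset w a k) = Set.univ)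
    (f : X → ℝ) (hsub : ∀ x, f x ≤ ∑ᶠ ζ, w x ζ * f ζ)
    (x₀ : X) (hx₀ : w x₀ x₀ ≠ 1) (hmax : ∀ x, f x ≤ f x₀) :
    ∀ x y : X, f x = f y :=
  stmt_5_general w hnn hfin hrow hconn f hsub x₀ hx₀ hmax
end

section
/- If X is finite and sup_X u = sup_{∂X} u holds for every subharmonic function u on X, then X is boundary connected. -/
/-- converse of the max principle: it forces boundary connectedness. -/
theorem stmt_7 {X : Type*} [Fintype X] [Nonempty X] (w : X → X → ℝ)
    (hnn : ∀ x y, 0 ≤ w x y) (hrow : ∀ x, ∑ᶠ y, w x y = 1)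
    (hmax : ∀ u : X → ℝ, (∀ x, u x ≤ ∑ᶠ ζ, w x ζ * u ζ) →
      sSup (Set.range u) = sSup (u '' {x | w x x = 1})) :
    ∀ a : X, w a a ≠ 1 → ((⋃ k, Nset w a k) ∩ {x | w x x = 1}).Nonempty := by
  intro a _ha
  by_contra hcon
  rw [Set.not_nonempty_iff_eq_empty] at hcon
  classical
  set C : Set X := ⋃ k, Nset w a k with hC
  have haC : a ∈ C := Set.mem_iUnion.2 ⟨0, rfl⟩
  -- C is closed under positive-weight steps
  have hstep : ∀ x ∈ C, ∀ y, 0 < w x y → y ∈ C := by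
    intro x hx y hw
    rcases Set.mem_iUnion.1 hx with ⟨k, hk⟩
    exact Set.mem_iUnion.2 ⟨k + 1, ⟨x, hk, hw⟩⟩
  set u : X → ℝ := fun x => if x ∈ C then 1 else 0 with hu
  have hub : ∀ x, u x ≤ 1 := by
    intro x; simp only [hu]; split <;> norm_num
  have hsub : ∀ x, u x ≤ ∑ᶠ ζ, w x ζ * u ζ := by
    intro x
    rw [finsum_eq_sum_of_fintype]
    by_cases hx : x ∈ C
    · have : ∀ ζ : X, w x ζ * u ζ = w x ζ := by
        intro ζ
        by_cases hζ : ζ ∈ C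
        · simp [hu, hζ]
        · have : w x ζ = 0 := by
            rcases lt_or_eq_of_le (hnn x ζ) with h | h
            · exact absurd (hstep x hx ζ h) hζ
            · exact h.symm
          simp [this]
      simp only [this]
      have := hrow x
      rw [finsum_eq_sum_of_fintype] at this
      rw [this]
      simp [hu, hx]
    · simp only [hu, hx, if_false]
      exact Finset.sum_nonneg fun ζ _ => mul_nonneg (hnn x ζ)
        (by by_cases h : ζ ∈ C <;> simp [hu, h])
  have hkey := hmax u hsub
  have h1 : sSup (Set.range u) = 1 := by
    apply le_antisymm
    · exact Real.sSup_le (by rintro _ ⟨x, rfl⟩; exact hub x) zero_le_one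
    · apply le_csSup ⟨1, by rintro _ ⟨x, rfl⟩; exact hub x⟩
      exact ⟨a, by simp [hu, haC]⟩
  have h0 : sSup (u '' {x | w x x = 1}) ≤ 0 := by
    apply Real.sSup_le _ le_rfl
    rintro _ ⟨x, hx, rfl⟩
    have hxC : x ∉ C := by
      intro hxC
      have : x ∈ C ∩ {x | w x x = 1} := ⟨hxC, hx⟩
      rw [hcon] at this
      exact this
    simp [hu, hxC]
  rw [h1] at hkey
  linarith [hkey ▸ h0]
end

section
/- Suppose (X, λ) is a reversible (λ(x,y) > 0 ⟺ λ(y,x) > 0), locally finite, infinite connected graph. If f is a non-constant subharmonic function on X, then there exists an infinite sequence x₀, x₁, x₂, … of distinct points in X such that λ(x_i, x_{i+1}) > 0, f(x_i) < f(x_{i+1}), and f(x_{i+1}) = max{f(y) : λ(x_i, y) > 0} for all i ≥ 0. -/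
/-- on a reversible infinite connected graph every non-constant
subharmonic function admits a maximally increasing ray. -/
theorem stmt_8 {X : Type*} [Countable X] [Infinite X] (w : X → X → ℝ)
    (hnn : ∀ x y, 0 ≤ w x y) (hfin : ∀ x, (Function.support (w x)).Finite)
    (hrow : ∀ x, ∑ᶠ y, w x y = 1)
    (hrev : ∀ x y, 0 < w x y ↔ 0 < w y x)
    (hconn : ∀ a b : X, Relation.ReflTransGen (fun p q => 0 < w p q) a b)
    (f : X → ℝ) (hsub : ∀ x, f x ≤ ∑ᶠ ζ, w x ζ * f ζ)
    (hnc : ∃ a b : X, f a ≠ f b) :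
    ∃ x : ℕ → X, Function.Injective x ∧
      ∀ i : ℕ, 0 < w (x i) (x (i + 1)) ∧ f (x i) < f (x (i + 1)) ∧
        ∀ y, 0 < w (x i) y → f y ≤ f (x (i + 1)) := by
  classical
  set N : X → Finset X := fun x => (hfin x).toFinset with hN
  have hmemN : ∀ x y, y ∈ N x ↔ 0 < w x y := by
    intro x y
    simp only [hN, Set.Finite.mem_toFinset, Function.mem_support]
    constructor
    · intro h; exact lt_of_le_of_ne (hnn x y) (Ne.symm h)
    · intro h; exact ne_of_gt h
  have hrowsum : ∀ x, ∑ y ∈ N x, w x y = 1 := by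
    intro x
    rw [← hrow x]
    exact (finsum_eq_finset_sum_of_support_subset _ (by simp [hN])).symm
  have hNne : ∀ x, (N x).Nonempty := by
    intro x
    by_contra h
    rw [Finset.not_nonempty_iff_eq_empty] at h
    have := hrowsum x
    rw [h] at this; simp at this
  have hsub' : ∀ x, f x ≤ ∑ y ∈ N x, w x y * f y := by
    intro x
    refine (hsub x).trans_eq ?_
    refine finsum_eq_finset_sum_of_support_subset _ ?_
    intro y hy
    simp only [Function.mem_support] at hy
    have hw : w x y ≠ 0 := fun h => hy (by simp [h])
    simpa [hN, Set.Finite.mem_toFinset, Function.mem_support] using hw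
  have hmax : ∀ x, ∃ y ∈ N x, ∀ z ∈ N x, f z ≤ f y := by
    intro x
    obtain ⟨y, hy, hm⟩ := (N x).exists_max_image f (hNne x)
    exact ⟨y, hy, hm⟩
  -- sum bound by the max
  have hsumle : ∀ x y, (∀ z ∈ N x, f z ≤ f y) → f x ≤ f y := by
    intro x y hym
    refine (hsub' x).trans ?_
    calc ∑ z ∈ N x, w x z * f z ≤ ∑ z ∈ N x, w x z * f y := by
          refine Finset.sum_le_sum ?_
          intro z hz
          exact mul_le_mul_of_nonneg_left (hym z hz) (hnn x z)
      _ = f y := by rw [← Finset.sum_mul, hrowsum x, one_mul]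
  -- equality case: if the max equals f x, all neighbours have value f x
  have hkey : ∀ x y, y ∈ N x → (∀ z ∈ N x, f z ≤ f y) → ¬ f x < f y →
      ∀ z ∈ N x, f z = f x := by
    intro x y hy hym hnlt z hz
    have hfxy : f x = f y := le_antisymm (hsumle x y hym) (le_of_not_gt hnlt)
    by_contra hne
    have hzlt : f z < f y := lt_of_le_of_ne (hym z hz) (by rw [← hfxy] at hym ⊢; exact hne)
    have hstrict : ∑ ζ ∈ N x, w x ζ * f ζ < ∑ ζ ∈ N x, w x ζ * f y := by
      refine Finset.sum_lt_sum (fun ζ hζ => mul_le_mul_of_nonneg_left (hym ζ hζ) (hnn x ζ)) ?_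
      exact ⟨z, hz, mul_lt_mul_of_pos_left hzlt ((hmemN x z).1 hz)⟩
    have : f x < f y := by
      refine (hsub' x).trans_lt (hstrict.trans_eq ?_)
      rw [← Finset.sum_mul, hrowsum x, one_mul]
    exact hnlt this
  -- existence of a starting point
  set P : X → Prop := fun x => ∃ y ∈ N x, f x < f y with hPdef
  have hexists : ∃ x, P x := by
    by_contra h
    push_neg at h
    simp only [hPdef, not_exists, not_and, not_lt] at h
    have hall : ∀ x, ∀ z ∈ N x, f z = f x := by
      intro x
      obtain ⟨y, hy, hym⟩ := hmax x
      exact hkey x y hy hym (not_lt.2 (h x y hy))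
    obtain ⟨a, b, hab⟩ := hnc
    have hconst : ∀ a b : X, Relation.ReflTransGen (fun p q => 0 < w p q) a b → f a = f b := by
      intro a b hrt
      induction hrt with
      | refl => rfl
      | tail h1 h2 ih =>
        rw [ih]
        exact (hall _ _ ((hmemN _ _).2 h2)).symm
    exact hab (hconst a b (hconn a b))
  -- the step
  have hnext : ∀ t : {x : X // P x}, ∃ s : {x : X // P x},
      s.1 ∈ N t.1 ∧ f t.1 < f s.1 ∧ ∀ z ∈ N t.1, f z ≤ f s.1 := by
    rintro ⟨x, hx⟩
    obtain ⟨y, hy, hym⟩ := hmax x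
    obtain ⟨y0, hy0, hy0lt⟩ := hx
    have hxy : f x < f y := lt_of_lt_of_le hy0lt (hym y0 hy0)
    have hPy : P y := by
      by_contra hPy
      simp only [hPdef, not_exists, not_and, not_lt] at hPy
      obtain ⟨y', hy', hym'⟩ := hmax y
      have hally := hkey y y' hy' hym' (not_lt.2 (hPy y' hy'))
      have hxNy : x ∈ N y := (hmemN y x).2 ((hrev x y).1 ((hmemN x y).1 hy))
      exact absurd (hally x hxNy) (ne_of_lt hxy)
    exact ⟨⟨y, hPy⟩, hy, hxy, hym⟩
  choose step h1 h2 h3 using hnext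
  obtain ⟨x0, hx0⟩ := hexists
  set seq : ℕ → {x : X // P x} := fun n => step^[n] ⟨x0, hx0⟩ with hseq
  have hsucc : ∀ n, seq (n + 1) = step (seq n) := by
    intro n
    simp [hseq, Function.iterate_succ_apply']
  have hmono : StrictMono (fun n => f (seq n).1) := by
    refine strictMono_nat_of_lt_succ ?_
    intro n
    rw [hsucc n]
    exact h2 (seq n)
  refine ⟨fun n => (seq n).1, ?_, ?_⟩
  · intro a b hab
    exact hmono.injective (by simpa using congrArg f hab)
  · intro i
    simp only
    rw [hsucc i]
    refine ⟨(hmemN _ _).1 (h1 (seq i)), h2 (seq i), ?_⟩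
    intro y hy
    exact h3 (seq i) y ((hmemN _ _).2 hy)
end
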